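/- Let L be a line in (Z/N)² and suppose S_L ∈ L²(Z/N) is a unit-norm common eigenvector of all operators H_{τ,ω} with (τ,ω) ∈ L. Then |⟨H_{τ,ω}S_L, S_L⟩| = 1 for (τ,ω) ∈ L, and |⟨H_{τ,ω}S_L, S_L⟩| = 0 for (τ,ω) ∉ L. -/

import Mathlib

noncomputable def eN (N : ℕ) (x : ZMod N) : ℂ :=
  Complex.exp (2 * Real.pi * Complex.I * (x.val : ℂ) / N)

noncomputable def Hshift (N : ℕ) (τ ω : ZMod N) (S : ZMod N → ℂ) : ZMod N → ℂ :=
  fun t => eN N (ω * t) * S (t - τ)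

noncomputable def innerZ (N : ℕ) [NeZero N] (S₁ S₂ : ZMod N → ℂ) : ℂ :=
  ∑ t : ZMod N, S₁ t * (starRingEnd ℂ) (S₂ t)

/-!
The operators `Hshift` are unitary and commute up to the phase `eN` of the symplectic form. So if
`S` is an eigenvector of `H_q` (its eigenvalue is then unimodular), conjugating by `H_q` multiplies
`⟨H_p S, S⟩` by `eN (symplecticForm p q)`, which is `≠ 1` unless `p` is orthogonal to `q`; on the
line itself `⟨H_p S, S⟩` is the eigenvalue. That the orthogonal of `q = (a, b)` is exactly the
line is where `L.ncard = N` enters: it makes `n ↦ n • q` injective, which in the Artinian principal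
ideal ring `ZMod N` forces `a` and `b` to generate the unit ideal.
-/

theorem Function.injective_of_ncard_range_eq {α β : Type*} [Finite α] {f : α → β}
    (h : (Set.range f).ncard = Nat.card α) : f.Injective := by
  rw [← Set.image_univ, ← Set.ncard_univ] at h
  exact Set.injOn_univ.mp (Set.injOn_of_ncard_image_eq h)

section Lines

variable {R : Type*} [CommRing R]

def symplecticForm (p q : R × R) : R := p.2 * q.1 - p.1 * q.2

variable [IsArtinianRing R] [IsPrincipalIdealRing R]

theorem exists_mul_add_mul_eq_one_of_injective {a b : R}
    (h : Function.Injective fun n : R => (n * a, n * b)) : ∃ u v : R, u * a + v * b = 1 := by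
  set c := Submodule.IsPrincipal.generator (Ideal.span {a, b})
  have hspan : Ideal.span {c} = Ideal.span {a, b} := Ideal.span_singleton_generator _
  obtain ⟨x, hx⟩ : c ∣ a := Ideal.mem_span_singleton.mp (hspan ▸ Ideal.subset_span (by simp))
  obtain ⟨y, hy⟩ : c ∣ b := Ideal.mem_span_singleton.mp (hspan ▸ Ideal.subset_span (by simp))
  have hc : c ∈ nonZeroDivisors R := mem_nonZeroDivisors_iff_right.mpr fun n hn =>
    h (by simp only [hx, hy, ← mul_assoc, hn, zero_mul])
  have hone : (1 : R) ∈ Ideal.span {a, b} := by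
    rw [← hspan, Ideal.span_singleton_eq_top.mpr (IsArtinianRing.isUnit_of_mem_nonZeroDivisors hc)]
    trivial
  exact Ideal.mem_span_pair.mp hone

theorem exists_eq_mul_of_symplecticForm_eq_zero {a b : R}
    (h : Function.Injective fun n : R => (n * a, n * b)) {p : R × R}
    (hp : symplecticForm p (a, b) = 0) : ∃ n : R, p = (n * a, n * b) := by
  obtain ⟨u, v, huv⟩ := exists_mul_add_mul_eq_one_of_injective h
  have hp' : p.2 * a = p.1 * b := sub_eq_zero.mp hp
  refine ⟨u * p.1 + v * p.2, Prod.ext ?_ ?_⟩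
  · linear_combination (-p.1) * huv - v * hp'
  · linear_combination (-p.2) * huv + u * hp'

end Lines

instance (N : ℕ) : IsPrincipalIdealRing (ZMod N) :=
  IsPrincipalIdealRing.of_surjective (Int.castRingHom (ZMod N)) (ZMod.ringHom_surjective _)

theorem eN_eq_stdAddChar (N : ℕ) [NeZero N] (x : ZMod N) : eN N x = ZMod.stdAddChar x := by
  rw [ZMod.stdAddChar_apply, ZMod.toCircle_apply, eN]

section Heisenberg

variable {N : ℕ}

theorem Hshift_smul (τ ω : ZMod N) (c : ℂ) (S : ZMod N → ℂ) :
    Hshift N τ ω (c • S) = c • Hshift N τ ω S := by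
  ext t
  simp only [Hshift, Pi.smul_apply, smul_eq_mul]
  ring

variable [NeZero N]

theorem eN_add (x y : ZMod N) : eN N (x + y) = eN N x * eN N y := by
  simp only [eN_eq_stdAddChar, AddChar.map_add_eq_mul]

theorem norm_eN (x : ZMod N) : ‖eN N x‖ = 1 := by
  rw [eN_eq_stdAddChar, ZMod.stdAddChar_apply, Circle.norm_coe]

theorem eN_eq_one_iff {x : ZMod N} : eN N x = 1 ↔ x = 0 := by
  rw [eN_eq_stdAddChar, ← (ZMod.stdAddChar (N := N)).map_zero_eq_one,
    ZMod.injective_stdAddChar.eq_iff]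

theorem Hshift_Hshift (p q : ZMod N × ZMod N) (S : ZMod N → ℂ) :
    Hshift N p.1 p.2 (Hshift N q.1 q.2 S) =
      eN N (symplecticForm p q) • Hshift N q.1 q.2 (Hshift N p.1 p.2 S) := by
  ext t
  have he : eN N (p.2 * t) * eN N (q.2 * (t - p.1)) =
      eN N (symplecticForm p q) * (eN N (q.2 * t) * eN N (p.2 * (t - q.1))) := by
    simp only [← eN_add, symplecticForm]
    ring_nf
  simp only [Hshift, Pi.smul_apply, smul_eq_mul, sub_right_comm t p.1 q.1]
  linear_combination S (t - q.1 - p.1) * he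

theorem innerZ_smul_left (c : ℂ) (f g : ZMod N → ℂ) :
    innerZ N (c • f) g = c * innerZ N f g := by
  simp only [innerZ, Finset.mul_sum, Pi.smul_apply, smul_eq_mul, mul_assoc]

theorem innerZ_smul_right (c : ℂ) (f g : ZMod N → ℂ) :
    innerZ N f (c • g) = starRingEnd ℂ c * innerZ N f g := by
  simp only [innerZ, Finset.mul_sum, Pi.smul_apply, smul_eq_mul, map_mul]
  exact Finset.sum_congr rfl fun t _ => by ring

theorem innerZ_smul_smul {c : ℂ} (hc : ‖c‖ = 1) (f g : ZMod N → ℂ) :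
    innerZ N (c • f) (c • g) = innerZ N f g := by
  rw [innerZ_smul_left, innerZ_smul_right, ← mul_assoc, Complex.mul_conj,
    Complex.normSq_eq_norm_sq, hc]
  simp

theorem innerZ_Hshift_Hshift (τ ω : ZMod N) (f g : ZMod N → ℂ) :
    innerZ N (Hshift N τ ω f) (Hshift N τ ω g) = innerZ N f g := by
  have hunit : ∀ t : ZMod N, eN N (ω * t) * starRingEnd ℂ (eN N (ω * t)) = 1 := fun t => by
    rw [Complex.mul_conj, Complex.normSq_eq_norm_sq, norm_eN]
    simp
  calc innerZ N (Hshift N τ ω f) (Hshift N τ ω g)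
      = ∑ t : ZMod N, f (t - τ) * starRingEnd ℂ (g (t - τ)) := by
        refine Finset.sum_congr rfl fun t _ => ?_
        rw [Hshift, Hshift, map_mul]
        linear_combination f (t - τ) * starRingEnd ℂ (g (t - τ)) * hunit t
    _ = innerZ N f g := Fintype.sum_equiv (Equiv.subRight τ) _ _ fun _ => rfl

theorem norm_eq_one_of_Hshift_eq_smul {τ ω : ZMod N} {S : ZMod N → ℂ} {c : ℂ}
    (hc : Hshift N τ ω S = c • S) (hS : innerZ N S S ≠ 0) : ‖c‖ = 1 := by
  have h : ((‖c‖ ^ 2 : ℝ) : ℂ) * innerZ N S S = 1 * innerZ N S S := by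
    rw [← Complex.normSq_eq_norm_sq, ← Complex.mul_conj, mul_assoc, ← innerZ_smul_right,
      ← innerZ_smul_left, ← hc, innerZ_Hshift_Hshift, one_mul]
  exact (pow_eq_one_iff_of_nonneg (norm_nonneg c) two_ne_zero).mp
    (by exact_mod_cast mul_right_cancel₀ hS h)

theorem innerZ_Hshift_eq_zero {p q : ZMod N × ZMod N} {S : ZMod N → ℂ} {c : ℂ}
    (hq : Hshift N q.1 q.2 S = c • S) (hc : ‖c‖ = 1) (hpq : symplecticForm p q ≠ 0) :
    innerZ N (Hshift N p.1 p.2 S) S = 0 := by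
  have h : innerZ N (Hshift N p.1 p.2 S) S =
      eN N (symplecticForm p q) * innerZ N (Hshift N p.1 p.2 S) S :=
    calc innerZ N (Hshift N p.1 p.2 S) S
        = innerZ N (Hshift N p.1 p.2 (Hshift N q.1 q.2 S)) (Hshift N q.1 q.2 S) := by
          rw [hq, Hshift_smul, innerZ_smul_smul hc]
      _ = eN N (symplecticForm p q) * innerZ N (Hshift N p.1 p.2 S) S := by
          rw [Hshift_Hshift, innerZ_smul_left, innerZ_Hshift_Hshift]
  have hne : eN N (symplecticForm p q) ≠ 1 := mt eN_eq_one_iff.mp hpq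
  have h' : (1 - eN N (symplecticForm p q)) * innerZ N (Hshift N p.1 p.2 S) S = 0 := by
    linear_combination h
  exact (mul_eq_zero.mp h').resolve_left (sub_ne_zero.mpr hne.symm)

end Heisenberg

/-- If S_L is a unit-norm common eigenvector of all the operators H_{τ,ω} with
(τ,ω) in a line L (the Z/N-span of (a,b), having N elements), then
|⟨H_{τ,ω}S_L, S_L⟩| = 1 on L and = 0 off L. -/
theorem chirp_ambiguity_support (N : ℕ) [NeZero N] (a b : ZMod N)
    (L : Set (ZMod N × ZMod N))
    (hL : L = {p | ∃ n : ZMod N, p = (n * a, n * b)})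
    (hcard : L.ncard = N)
    (S_L : ZMod N → ℂ)
    (hnorm : innerZ N S_L S_L = 1)
    (heig : ∀ p ∈ L, ∃ lam : ℂ, Hshift N p.1 p.2 S_L = fun t => lam * S_L t)
    (τ ω : ZMod N) :
    ((τ, ω) ∈ L → ‖innerZ N (Hshift N τ ω S_L) S_L‖ = 1) ∧
    ((τ, ω) ∉ L → ‖innerZ N (Hshift N τ ω S_L) S_L‖ = 0) := by
  have hS : innerZ N S_L S_L ≠ 0 := by simp [hnorm]
  refine ⟨fun hp => ?_, fun hp => ?_⟩
  · obtain ⟨c, hc⟩ := heig _ hp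
    replace hc : Hshift N τ ω S_L = c • S_L := hc
    rw [hc, innerZ_smul_left, hnorm, mul_one]
    exact norm_eq_one_of_Hshift_eq_smul hc hS
  · obtain ⟨c, hc⟩ := heig (a, b) (by rw [hL]; exact ⟨1, by simp⟩)
    replace hc : Hshift N a b S_L = c • S_L := hc
    have hrange : Set.range (fun n : ZMod N => (n * a, n * b)) = L := by
      rw [hL]
      simp only [Set.range, eq_comm]
    have hinj : Function.Injective fun n : ZMod N => (n * a, n * b) :=
      Function.injective_of_ncard_range_eq (by rw [hrange, hcard, Nat.card_zmod])
    have hpq : symplecticForm (τ, ω) (a, b) ≠ 0 := fun h =>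
      hp (by rw [hL]; exact exists_eq_mul_of_symplecticForm_eq_zero hinj h)
    rw [innerZ_Hshift_eq_zero (p := (τ, ω)) (q := (a, b)) hc (norm_eq_one_of_Hshift_eq_smul hc hS) hpq, norm_zero]
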